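/- Let H be a real Hilbert space, C ⊆ H nonempty closed convex, and F, F_h : H → H with F α-strongly monotone. Suppose u, u_h ∈ C satisfy ⟨F(u), v - u⟩ ≥ 0 and ⟨F_h(u_h), v - u_h⟩ ≥ 0 for all v ∈ C. Then α‖u - u_h‖ ≤ ‖F(u_h) - F_h(u_h)‖. -/
import Mathlib

open RealInnerProductSpace

/-- If `u` and `u_h` solve the variational inequalities for `F` and `F_h`
respectively over the same convex set `C`, with `F` `α`-strongly monotone, then
`α‖u - u_h‖ ≤ ‖F(u_h) - F_h(u_h)‖`. -/
theorem variationalInequality_perturbation_bound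
    {H : Type*} [NormedAddCommGroup H] [InnerProductSpace ℝ H] [CompleteSpace H]
    (C : Set H) (hne : C.Nonempty) (hcl : IsClosed C) (hconv : Convex ℝ C)
    (F Fh : H → H) (α : ℝ) (hα : 0 < α)
    (hmono : ∀ a b : H, α * ‖a - b‖ ^ 2 ≤ ⟪F a - F b, a - b⟫)
    (u uh : H) (hu : u ∈ C) (huh : uh ∈ C)
    (hVI : ∀ v ∈ C, 0 ≤ ⟪F u, v - u⟫)
    (hVIh : ∀ v ∈ C, 0 ≤ ⟪Fh uh, v - uh⟫) :
    α * ‖u - uh‖ ≤ ‖F uh - Fh uh‖ := by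
  rcases eq_or_ne u uh with rfl | hne'
  · simp [norm_nonneg]
  have hn : 0 < ‖u - uh‖ := by
    rw [norm_pos_iff]; exact sub_ne_zero.mpr hne'
  have h1 : 0 ≤ ⟪F u, uh - u⟫ := hVI uh huh
  have h2 : 0 ≤ ⟪Fh uh, u - uh⟫ := hVIh u hu
  have h3 := hmono u uh
  have key : α * ‖u - uh‖ ^ 2 ≤ ⟪F uh - Fh uh, uh - u⟫ := by
    have e1 : ⟪F u - F uh, u - uh⟫ = ⟪F u, u - uh⟫ - ⟪F uh, u - uh⟫ :=
      inner_sub_left _ _ _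
    have e2 : ⟪F u, u - uh⟫ = -⟪F u, uh - u⟫ := by
      rw [show (u - uh : H) = -(uh - u) by abel, inner_neg_right]
    have e3 : ⟪F uh - Fh uh, uh - u⟫ = ⟪F uh, uh - u⟫ - ⟪Fh uh, uh - u⟫ :=
      inner_sub_left _ _ _
    have e4 : ⟪Fh uh, uh - u⟫ = -⟪Fh uh, u - uh⟫ := by
      rw [show (uh - u : H) = -(u - uh) by abel, inner_neg_right]
    have e5 : ⟪F uh, u - uh⟫ = -⟪F uh, uh - u⟫ := by
      rw [show (u - uh : H) = -(uh - u) by abel, inner_neg_right]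
    linarith
  have cs : ⟪F uh - Fh uh, uh - u⟫ ≤ ‖F uh - Fh uh‖ * ‖uh - u‖ :=
    real_inner_le_norm _ _
  have hnorm : ‖uh - u‖ = ‖u - uh‖ := norm_sub_rev _ _
  have h6 : α * ‖u - uh‖ * ‖u - uh‖ ≤ ‖F uh - Fh uh‖ * ‖u - uh‖ := by
    rw [hnorm] at cs; nlinarith [key, cs]
  exact le_of_mul_le_mul_right h6 hn
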